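/- Let Q be a commutative nontrivial ZDF involutive quantale, X a set, and χ a global section of the prime spectrum over X. For any two commutative von Neumann unital *-subsemialgebras A and B of Hom(X,X), if e is the unique primitive subunital idempotent of A with e ∉ χ(A) and d is the unique primitive subunital idempotent of B with d ∉ χ(B), then e∘d ≠ 0. -/
import Mathlib


open Classical

noncomputable section

universe u v

/-- A commutative involutive quantale: a complete lattice with a commutative
monoid operation distributing over arbitrary joins, together with a
join-preserving involution compatible with multiplication and unit. -/
structure CommInvQuantale (Q : Type u) [CompleteLattice Q] : Type u where
  mul : Q → Q → Q
  one : Q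
  mul_comm : ∀ a b : Q, mul a b = mul b a
  mul_assoc : ∀ a b c : Q, mul (mul a b) c = mul a (mul b c)
  one_mul : ∀ a : Q, mul one a = a
  mul_sSup : ∀ (a : Q) (S : Set Q), mul a (sSup S) = ⨆ y ∈ S, mul a y
  inv : Q → Q
  inv_inv : ∀ a : Q, inv (inv a) = a
  inv_sSup : ∀ S : Set Q, inv (sSup S) = ⨆ y ∈ S, inv y
  inv_mul : ∀ a b : Q, inv (mul a b) = mul (inv a) (inv b)
  inv_one : inv one = one

namespace CommInvQuantale

variable {Q : Type u} [CompleteLattice Q] {X : Type v}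

/-- Zero-divisor free: `x·y = 0` implies `x = 0` or `y = 0` (where `0 = ⊥`). -/
def ZDF (Qd : CommInvQuantale Q) : Prop :=
  ∀ a b : Q, Qd.mul a b = ⊥ → a = ⊥ ∨ b = ⊥

/-- Nontrivial: `1 ≠ 0`. -/
def NontrivialQ (Qd : CommInvQuantale Q) : Prop := Qd.one ≠ (⊥ : Q)

/-- The zero `Q`-relation. -/
def qzero : X → X → Q := fun _ _ => (⊥ : Q)

/-- The support of a `Q`-relation. -/
def supp (f : X → X → Q) : Set X := {x | ∃ y, f x y ≠ (⊥ : Q)}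

/-- The cosupport of a `Q`-relation. -/
def cosupp (f : X → X → Q) : Set X := {x | ∃ y, f y x ≠ (⊥ : Q)}

/-- The kernel of a character of `A`. -/
def kerChar (A : Set (X → X → Q)) (ρ : (X → X → Q) → Q) : Set (X → X → Q) :=
  {f ∈ A | ρ f = (⊥ : Q)}

/-- The map `w : Q → 2` sending `0` to `0` and every nonzero element to `1`
(with `2` modelled by `Bool`). -/
def wmap : Q → Bool := fun q => if q = (⊥ : Q) then false else true

/-- The kernel of a homomorphism `γ : A → 2` (with `2` modelled by `Bool`). -/
def kerTwo (A : Set (X → X → Q)) (γ : (X → X → Q) → Bool) : Set (X → X → Q) :=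
  {f ∈ A | γ f = false}

variable (Qd : CommInvQuantale Q)

/-- Composition of `Q`-relations: `(f ∘ g)(x,z) = ⋁_y g(x,y) · f(y,z)`,
so `qcomp Qd f g` is "`f` after `g`". -/
def qcomp (f g : X → X → Q) : X → X → Q := fun x z => ⨆ y : X, Qd.mul (g x y) (f y z)

/-- The identity `Q`-relation. -/
def qid : X → X → Q := fun x y => if x = y then Qd.one else ⊥

/-- The dagger of a `Q`-relation: `f†(x,y) = f(y,x)*`. -/
def qdag (f : X → X → Q) : X → X → Q := fun x y => Qd.inv (f y x)

/-- Scalar multiplication of a `Q`-relation: `(q•f)(x,y) = q·f(x,y)`. -/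
def qsmul (q : Q) (f : X → X → Q) : X → X → Q := fun x y => Qd.mul q (f x y)

/-- A commutative unital *-subsemialgebra of `Hom(X,X)`: contains the zero and
identity relations, closed under pointwise binary join, composition, scalar
multiplication and dagger, and composition is commutative on it. -/
structure IsSubalg (A : Set (X → X → Q)) : Prop where
  zero_mem : qzero ∈ A
  id_mem : Qd.qid ∈ A
  sup_mem : ∀ f ∈ A, ∀ g ∈ A, f ⊔ g ∈ A
  comp_mem : ∀ f ∈ A, ∀ g ∈ A, Qd.qcomp f g ∈ A
  smul_mem : ∀ (q : Q), ∀ f ∈ A, Qd.qsmul q f ∈ A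
  dag_mem : ∀ f ∈ A, Qd.qdag f ∈ A
  comp_comm : ∀ f ∈ A, ∀ g ∈ A, Qd.qcomp f g = Qd.qcomp g f

/-- The commutant of a set of `Q`-relations. -/
def commutant (B : Set (X → X → Q)) : Set (X → X → Q) :=
  { f | ∀ g ∈ B, Qd.qcomp f g = Qd.qcomp g f }

/-- A commutative von Neumann unital *-subsemialgebra: a commutative unital
*-subsemialgebra equal to its double commutant. -/
def IsVN (A : Set (X → X → Q)) : Prop :=
  Qd.IsSubalg A ∧ Qd.commutant (Qd.commutant A) = A

/-- A character of `A`: a map `ρ : Hom(X,X) → Q` with `ρ(0) = 0`, `ρ(id) = 1`,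
preserving binary joins, composition and dagger on `A`. -/
structure IsChar (A : Set (X → X → Q)) (ρ : (X → X → Q) → Q) : Prop where
  map_zero : ρ qzero = (⊥ : Q)
  map_id : ρ Qd.qid = Qd.one
  map_sup : ∀ f ∈ A, ∀ g ∈ A, ρ (f ⊔ g) = ρ f ⊔ ρ g
  map_comp : ∀ f ∈ A, ∀ g ∈ A, ρ (Qd.qcomp f g) = Qd.mul (ρ f) (ρ g)
  map_dag : ∀ f ∈ A, ρ (Qd.qdag f) = Qd.inv (ρ f)

/-- An ideal of `A`. -/
structure IsIdeal (A J : Set (X → X → Q)) : Prop where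
  subset : J ⊆ A
  zero_mem : qzero ∈ J
  sup_mem : ∀ a ∈ J, ∀ b ∈ J, a ⊔ b ∈ J
  absorb : ∀ f ∈ A, ∀ a ∈ J, Qd.qcomp f a ∈ J

/-- A prime k*-ideal of `A`: a proper prime ideal which is a k-ideal closed
under dagger. -/
structure IsPrimeKStarIdeal (A J : Set (X → X → Q)) : Prop where
  ideal : Qd.IsIdeal A J
  proper : J ≠ A
  prime : ∀ f ∈ A, ∀ g ∈ A, Qd.qcomp f g ∈ J → f ∈ J ∨ g ∈ J
  kideal : ∀ a ∈ J, ∀ b ∈ A, a ⊔ b ∈ J → b ∈ J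
  dag_mem : ∀ a ∈ J, Qd.qdag a ∈ J

/-- A global section of the Gelfand spectrum over `X`: an assignment of a
character to every commutative von Neumann unital *-subsemialgebra of
`Hom(X,X)`, compatible with restriction along inclusions. -/
def IsGelfandGlobalSection (ρ : Set (X → X → Q) → (X → X → Q) → Q) : Prop :=
  (∀ A : Set (X → X → Q), Qd.IsVN A → Qd.IsChar A (ρ A)) ∧
  (∀ A B : Set (X → X → Q), Qd.IsVN A → Qd.IsVN B → A ⊆ B → ∀ f ∈ A, ρ A f = ρ B f)

/-- A global section of the prime spectrum over `X`: an assignment of a prime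
k*-ideal to every commutative von Neumann unital *-subsemialgebra of
`Hom(X,X)`, compatible with restriction along inclusions. -/
def IsPrimeGlobalSection (χ : Set (X → X → Q) → Set (X → X → Q)) : Prop :=
  (∀ A : Set (X → X → Q), Qd.IsVN A → Qd.IsPrimeKStarIdeal A (χ A)) ∧
  (∀ A B : Set (X → X → Q), Qd.IsVN A → Qd.IsVN B → A ⊆ B → χ A = A ∩ χ B)

/-- An idempotent element of `A`. -/
def IsIdem (A : Set (X → X → Q)) (p : X → X → Q) : Prop :=
  p ∈ A ∧ Qd.qcomp p p = p

/-- A subunital idempotent of `A`: an idempotent with an orthogonal idempotent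
complement summing to the identity. -/
def IsSubunital (A : Set (X → X → Q)) (p : X → X → Q) : Prop :=
  Qd.IsIdem A p ∧ ∃ q, Qd.IsIdem A q ∧ Qd.qcomp p q = qzero ∧ p ⊔ q = Qd.qid

/-- A primitive subunital idempotent of `A`. -/
def IsPrimitive (A : Set (X → X → Q)) (p : X → X → Q) : Prop :=
  Qd.IsSubunital A p ∧ p ≠ qzero ∧
    ¬ ∃ s t, Qd.IsSubunital A s ∧ s ≠ qzero ∧ Qd.IsSubunital A t ∧ t ≠ qzero ∧
      Qd.qcomp s t = qzero ∧ s ⊔ t = p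

/-- The unique quantale map `! : 2 → Q` (with `2` modelled by `Bool`). -/
def bang : Bool → Q := fun b => if b then Qd.one else ⊥

/-- A homomorphism `γ : A → 2` (with `2` the two-element quantale, modelled by
`Bool` with join `||` and multiplication `&&`, trivial involution). -/
structure IsTwoHom (A : Set (X → X → Q)) (γ : (X → X → Q) → Bool) : Prop where
  map_zero : γ qzero = false
  map_id : γ Qd.qid = true
  map_sup : ∀ f ∈ A, ∀ g ∈ A, γ (f ⊔ g) = (γ f || γ g)
  map_comp : ∀ f ∈ A, ∀ g ∈ A, γ (Qd.qcomp f g) = (γ f && γ g)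
  map_dag : ∀ f ∈ A, γ (Qd.qdag f) = γ f

/-- The Gelfand spectrum of `A`: the set of characters of `A`. -/
def SpecG (A : Set (X → X → Q)) : Type (max u v) :=
  {ρ : (X → X → Q) → Q // Qd.IsChar A ρ}

/-- The prime spectrum of `A`: the set of prime k*-ideals of `A`. -/
def SpecP (A : Set (X → X → Q)) : Type (max u v) :=
  {J : Set (X → X → Q) // Qd.IsPrimeKStarIdeal A J}

/-- The Zariski topology on the Gelfand spectrum, with basic closed sets
`V_G(J) = {ρ | J ⊆ ker ρ}` for ideals `J` of `A`. -/
def zariskiG (A : Set (X → X → Q)) : TopologicalSpace (Qd.SpecG A) :=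
  TopologicalSpace.generateFrom
    {U | ∃ J : Set (X → X → Q), Qd.IsIdeal A J ∧
      U = {ρ : Qd.SpecG A | J ⊆ kerChar A ρ.1}ᶜ}

/-- The Zariski topology on the prime spectrum, with basic closed sets
`V_P(J) = {K | J ⊆ K}` for ideals `J` of `A`. -/
def zariskiP (A : Set (X → X → Q)) : TopologicalSpace (Qd.SpecP A) :=
  TopologicalSpace.generateFrom
    {U | ∃ J : Set (X → X → Q), Qd.IsIdeal A J ∧
      U = {K : Qd.SpecP A | J ⊆ K.1}ᶜ}

/-! ### Auxiliary lemmas -/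

lemma aux_iSup_ite₁ {α : Type*} [CompleteLattice α] {ι : Type*} (x : ι) (f : ι → α) :
    (⨆ y, if x = y then f y else ⊥) = f x := by
  apply le_antisymm
  · refine iSup_le fun y => ?_
    by_cases h : x = y
    · subst h; simp
    · simp [h]
  · have h := le_iSup (fun y => if x = y then f y else ⊥) x
    simpa using h

lemma aux_iSup_ite₂ {α : Type*} [CompleteLattice α] {ι : Type*} (x : ι) (f : ι → α) :
    (⨆ y, if y = x then f y else ⊥) = f x := by
  apply le_antisymm
  · refine iSup_le fun y => ?_
    by_cases h : y = x
    · subst h; simp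
    · simp [h]
  · have h := le_iSup (fun y => if y = x then f y else ⊥) x
    simpa using h

lemma aux_mul_bot (a : Q) : Qd.mul a ⊥ = ⊥ := by
  have h := Qd.mul_sSup a ∅
  simpa using h

lemma aux_bot_mul (a : Q) : Qd.mul ⊥ a = ⊥ := by
  rw [Qd.mul_comm]; exact Qd.aux_mul_bot a

lemma aux_mul_one (a : Q) : Qd.mul a Qd.one = a := by
  rw [Qd.mul_comm]; exact Qd.one_mul a

lemma aux_inv_bot : Qd.inv ⊥ = ⊥ := by
  have h := Qd.inv_sSup ∅
  simpa using h

lemma aux_mul_iSup {ι : Type v} (a : Q) (f : ι → Q) :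
    Qd.mul a (⨆ i, f i) = ⨆ i, Qd.mul a (f i) := by
  have h := Qd.mul_sSup a (Set.range f)
  rwa [sSup_range, iSup_range] at h

lemma aux_inv_iSup {ι : Type v} (f : ι → Q) :
    Qd.inv (⨆ i, f i) = ⨆ i, Qd.inv (f i) := by
  have h := Qd.inv_sSup (Set.range f)
  rwa [sSup_range, iSup_range] at h

lemma aux_mul_sup (a b c : Q) : Qd.mul a (b ⊔ c) = Qd.mul a b ⊔ Qd.mul a c := by
  have h := Qd.mul_sSup a {b, c}
  simpa [iSup_or, iSup_sup_eq] using h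

lemma aux_iSup_mul {ι : Type v} (a : Q) (f : ι → Q) :
    Qd.mul (⨆ i, f i) a = ⨆ i, Qd.mul (f i) a := by
  rw [Qd.mul_comm, Qd.aux_mul_iSup]
  exact iSup_congr fun i => Qd.mul_comm _ _

/-! Basic `qcomp` identities. -/

lemma aux_zero_comp (f : X → X → Q) : Qd.qcomp qzero f = qzero := by
  funext x z
  simp [qcomp, qzero, Qd.aux_mul_bot]

lemma aux_comp_zero (f : X → X → Q) : Qd.qcomp f qzero = qzero := by
  funext x z
  simp [qcomp, qzero, Qd.aux_bot_mul]

lemma aux_comp_id (f : X → X → Q) : Qd.qcomp f Qd.qid = f := by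
  funext x z
  show (⨆ y, Qd.mul (Qd.qid x y) (f y z)) = f x z
  have h : ∀ y, Qd.mul (Qd.qid x y) (f y z) = if x = y then f y z else ⊥ := by
    intro y
    simp only [qid]
    split_ifs with h
    · exact Qd.one_mul _
    · exact Qd.aux_bot_mul _
  simp_rw [h]
  exact aux_iSup_ite₁ x _

lemma aux_id_comp (f : X → X → Q) : Qd.qcomp Qd.qid f = f := by
  funext x z
  show (⨆ y, Qd.mul (f x y) (Qd.qid y z)) = f x z
  have h : ∀ y, Qd.mul (f x y) (Qd.qid y z) = if y = z then f x y else ⊥ := by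
    intro y
    simp only [qid]
    split_ifs with h
    · exact Qd.aux_mul_one _
    · exact Qd.aux_mul_bot _
  simp_rw [h]
  exact aux_iSup_ite₂ z _

lemma aux_qcomp_assoc (f g h : X → X → Q) :
    Qd.qcomp (Qd.qcomp f g) h = Qd.qcomp f (Qd.qcomp g h) := by
  funext x z
  simp only [qcomp]
  simp_rw [Qd.aux_mul_iSup, Qd.aux_iSup_mul]
  rw [iSup_comm]
  exact iSup_congr fun w => iSup_congr fun y => (Qd.mul_assoc _ _ _).symm

lemma aux_comp_sup_left (f g h : X → X → Q) :
    Qd.qcomp (f ⊔ g) h = Qd.qcomp f h ⊔ Qd.qcomp g h := by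
  funext x z
  show (⨆ y, Qd.mul (h x y) ((f ⊔ g) y z))
      = (⨆ y, Qd.mul (h x y) (f y z)) ⊔ ⨆ y, Qd.mul (h x y) (g y z)
  rw [← iSup_sup_eq]
  refine iSup_congr fun y => ?_
  show Qd.mul (h x y) (f y z ⊔ g y z) = _
  exact Qd.aux_mul_sup _ _ _

lemma aux_comp_sup_right (f g h : X → X → Q) :
    Qd.qcomp f (g ⊔ h) = Qd.qcomp f g ⊔ Qd.qcomp f h := by
  funext x z
  show (⨆ y, Qd.mul ((g ⊔ h) x y) (f y z))
      = (⨆ y, Qd.mul (g x y) (f y z)) ⊔ ⨆ y, Qd.mul (h x y) (f y z)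
  rw [← iSup_sup_eq]
  refine iSup_congr fun y => ?_
  show Qd.mul (g x y ⊔ h x y) (f y z) = _
  rw [Qd.mul_comm, Qd.aux_mul_sup, Qd.mul_comm (g x y), Qd.mul_comm (h x y)]

lemma aux_smul_comp (q : Q) (f g : X → X → Q) :
    Qd.qcomp (Qd.qsmul q f) g = Qd.qsmul q (Qd.qcomp f g) := by
  funext x z
  show (⨆ y, Qd.mul (g x y) (Qd.mul q (f y z)))
      = Qd.mul q (⨆ y, Qd.mul (g x y) (f y z))
  rw [Qd.aux_mul_iSup]
  refine iSup_congr fun y => ?_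
  rw [← Qd.mul_assoc, Qd.mul_comm (g x y) q, Qd.mul_assoc]

lemma aux_comp_smul (q : Q) (f g : X → X → Q) :
    Qd.qcomp f (Qd.qsmul q g) = Qd.qsmul q (Qd.qcomp f g) := by
  funext x z
  show (⨆ y, Qd.mul (Qd.mul q (g x y)) (f y z))
      = Qd.mul q (⨆ y, Qd.mul (g x y) (f y z))
  rw [Qd.aux_mul_iSup]
  refine iSup_congr fun y => ?_
  rw [Qd.mul_assoc]

lemma aux_dag_dag (f : X → X → Q) : Qd.qdag (Qd.qdag f) = f := by
  funext x y
  exact Qd.inv_inv (f x y)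

lemma aux_dag_zero : Qd.qdag (qzero : X → X → Q) = qzero := by
  funext x y
  exact Qd.aux_inv_bot

lemma aux_dag_qcomp (f g : X → X → Q) :
    Qd.qdag (Qd.qcomp f g) = Qd.qcomp (Qd.qdag g) (Qd.qdag f) := by
  funext x z
  show Qd.inv (⨆ y, Qd.mul (g z y) (f y x))
      = ⨆ y, Qd.mul (Qd.qdag f x y) (Qd.qdag g y z)
  rw [Qd.aux_inv_iSup]
  refine iSup_congr fun y => ?_
  rw [Qd.inv_mul]
  exact Qd.mul_comm _ _

/-! Commutant lemmas. -/

lemma aux_antitone {G H : Set (X → X → Q)} (h : G ⊆ H) :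
    Qd.commutant H ⊆ Qd.commutant G :=
  fun _ hf g hg => hf g (h hg)

lemma aux_sub_bicomm (G : Set (X → X → Q)) :
    G ⊆ Qd.commutant (Qd.commutant G) :=
  fun g hg f hf => (hf g hg).symm

lemma aux_tricomm (G : Set (X → X → Q)) :
    Qd.commutant (Qd.commutant (Qd.commutant G)) = Qd.commutant G :=
  Set.Subset.antisymm (Qd.aux_antitone (Qd.aux_sub_bicomm G)) (Qd.aux_sub_bicomm _)

lemma aux_commutant_dag {G : Set (X → X → Q)} (hdag : ∀ g ∈ G, Qd.qdag g ∈ G) :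
    ∀ f ∈ Qd.commutant G, Qd.qdag f ∈ Qd.commutant G := by
  intro f hf g hg
  have h1 : Qd.qcomp (Qd.qdag f) g = Qd.qdag (Qd.qcomp (Qd.qdag g) f) := by
    rw [Qd.aux_dag_qcomp, Qd.aux_dag_dag]
  have h2 : Qd.qcomp g (Qd.qdag f) = Qd.qdag (Qd.qcomp f (Qd.qdag g)) := by
    rw [Qd.aux_dag_qcomp, Qd.aux_dag_dag]
  rw [h1, h2, hf (Qd.qdag g) (hdag g hg)]

lemma aux_bicomm_isVN (G : Set (X → X → Q))
    (hdag : ∀ g ∈ G, Qd.qdag g ∈ G)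
    (hcomm : ∀ f ∈ G, ∀ g ∈ G, Qd.qcomp f g = Qd.qcomp g f) :
    Qd.IsVN (Qd.commutant (Qd.commutant G)) := by
  have hGsub : G ⊆ Qd.commutant G := fun g hg f hf => hcomm g hg f hf
  have hbsub : Qd.commutant (Qd.commutant G) ⊆ Qd.commutant G := Qd.aux_antitone hGsub
  have hdag' : ∀ f ∈ Qd.commutant G, Qd.qdag f ∈ Qd.commutant G :=
    Qd.aux_commutant_dag hdag
  refine ⟨⟨?_, ?_, ?_, ?_, ?_, ?_, ?_⟩, ?_⟩
  · exact fun g _ => by rw [Qd.aux_zero_comp, Qd.aux_comp_zero]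
  · exact fun g _ => by rw [Qd.aux_id_comp, Qd.aux_comp_id]
  · intro f hf g hg h hh
    rw [Qd.aux_comp_sup_left, Qd.aux_comp_sup_right, hf h hh, hg h hh]
  · intro f hf g hg h hh
    rw [Qd.aux_qcomp_assoc f g h, hg h hh, ← Qd.aux_qcomp_assoc f h g, hf h hh,
      Qd.aux_qcomp_assoc h f g]
  · intro q f hf g hg
    rw [Qd.aux_smul_comp, Qd.aux_comp_smul, hf g hg]
  · exact Qd.aux_commutant_dag hdag'
  · intro f hf g hg
    exact hf g (hbsub hg)
  · exact Qd.aux_tricomm (Qd.commutant G)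

/-- A subunital idempotent is self-adjoint (given ZDF). -/
lemma aux_subunital_selfadj (hZDF : Qd.ZDF) {A : Set (X → X → Q)} {p : X → X → Q}
    (hp : Qd.IsSubunital A p) : Qd.qdag p = p := by
  obtain ⟨⟨hpA, hpp⟩, q, hq, hpq, hsum⟩ := hp
  have hoff : ∀ x y : X, x ≠ y → p x y = ⊥ := by
    intro x y hxy
    have h := congrFun (congrFun hsum x) y
    have h' : p x y ⊔ q x y = Qd.qid x y := h
    rw [qid, if_neg hxy] at h'
    exact (sup_eq_bot_iff.mp h').1
  have hdiag : ∀ x : X, p x x = ⊥ ∨ p x x = Qd.one := by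
    intro x
    have hsum' : p x x ⊔ q x x = Qd.one := by
      have h := congrFun (congrFun hsum x) x
      have h' : p x x ⊔ q x x = Qd.qid x x := h
      rwa [qid, if_pos rfl] at h'
    have h0 : Qd.mul (q x x) (p x x) = ⊥ := by
      have h := congrFun (congrFun hpq x) x
      have h' : (⨆ y, Qd.mul (q x y) (p y x)) = ⊥ := h
      exact iSup_eq_bot.mp h' x
    rcases hZDF _ _ h0 with hq0 | hp0
    · right
      rw [hq0, sup_bot_eq] at hsum'
      exact hsum'
    · left; exact hp0
  funext x y
  show Qd.inv (p y x) = p x y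
  by_cases hxy : x = y
  · subst hxy
    rcases hdiag x with h | h <;> rw [h]
    · exact Qd.aux_inv_bot
    · exact Qd.inv_one
  · rw [hoff y x (fun h => hxy h.symm), hoff x y hxy]
    exact Qd.aux_inv_bot

/-- For a global section `χ` of the prime spectrum and von
Neumann algebras `A`, `B`, if `e` is the unique primitive subunital idempotent
of `A` outside `χ(A)` and `d` the one of `B` outside `χ(B)`, then `e∘d ≠ 0`. -/
theorem distinguished_idempotents_not_orthogonal
    (Qd : CommInvQuantale Q) (hZDF : Qd.ZDF) (hNT : Qd.NontrivialQ)
    (X : Type v) (χ : Set (X → X → Q) → Set (X → X → Q))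
    (hχ : Qd.IsPrimeGlobalSection χ)
    (A B : Set (X → X → Q)) (hA : Qd.IsVN A) (hB : Qd.IsVN B)
    (e d : X → X → Q)
    (he : Qd.IsPrimitive A e) (heχ : e ∉ χ A)
    (heu : ∀ e' : X → X → Q, Qd.IsPrimitive A e' → e' ∉ χ A → e' = e)
    (hd : Qd.IsPrimitive B d) (hdχ : d ∉ χ B)
    (hdu : ∀ d' : X → X → Q, Qd.IsPrimitive B d' → d' ∉ χ B → d' = d) :
    Qd.qcomp e d ≠ qzero := by
  intro hcontra
  have heA : e ∈ A := he.1.1.1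
  have hdB : d ∈ B := hd.1.1.1
  have hdagE : Qd.qdag e = e := Qd.aux_subunital_selfadj hZDF he.1
  have hdagD : Qd.qdag d = d := Qd.aux_subunital_selfadj hZDF hd.1
  have hde : Qd.qcomp d e = qzero := by
    have h := Qd.aux_dag_qcomp e d
    rw [hcontra, hdagD, hdagE, Qd.aux_dag_zero] at h
    exact h.symm
  set G : Set (X → X → Q) := {e, d} with hG
  have hGdag : ∀ g ∈ G, Qd.qdag g ∈ G := by
    rintro g (rfl | rfl)
    · rw [hdagE]; exact Set.mem_insert _ _
    · rw [hdagD]; exact Set.mem_insert_of_mem _ rfl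
  have hGcomm : ∀ f ∈ G, ∀ g ∈ G, Qd.qcomp f g = Qd.qcomp g f := by
    rintro f (rfl | rfl) g (rfl | rfl) <;> simp [hcontra, hde]
  have hvnC : Qd.IsVN (Qd.commutant (Qd.commutant G)) := Qd.aux_bicomm_isVN G hGdag hGcomm
  have hvnCA : Qd.IsVN (Qd.commutant (Qd.commutant {e})) := by
    refine Qd.aux_bicomm_isVN {e} ?_ ?_
    · rintro g rfl; rw [hdagE]; rfl
    · rintro f rfl g rfl; rfl
  have hvnCB : Qd.IsVN (Qd.commutant (Qd.commutant {d})) := by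
    refine Qd.aux_bicomm_isVN {d} ?_ ?_
    · rintro g rfl; rw [hdagD]; rfl
    · rintro f rfl g rfl; rfl
  have hCAsubA : Qd.commutant (Qd.commutant {e}) ⊆ A := by
    have h1 : ({e} : Set (X → X → Q)) ⊆ A := Set.singleton_subset_iff.mpr heA
    have h2 := Qd.aux_antitone (Qd.aux_antitone h1)
    rwa [hA.2] at h2
  have hCBsubB : Qd.commutant (Qd.commutant {d}) ⊆ B := by
    have h1 : ({d} : Set (X → X → Q)) ⊆ B := Set.singleton_subset_iff.mpr hdB
    have h2 := Qd.aux_antitone (Qd.aux_antitone h1)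
    rwa [hB.2] at h2
  have hCAsubC : Qd.commutant (Qd.commutant {e}) ⊆ Qd.commutant (Qd.commutant G) := by
    have h1 : ({e} : Set (X → X → Q)) ⊆ G := by
      rintro g rfl; exact Set.mem_insert _ _
    exact Qd.aux_antitone (Qd.aux_antitone h1)
  have hCBsubC : Qd.commutant (Qd.commutant {d}) ⊆ Qd.commutant (Qd.commutant G) := by
    have h1 : ({d} : Set (X → X → Q)) ⊆ G := by
      rintro g rfl; exact Set.mem_insert_of_mem _ rfl
    exact Qd.aux_antitone (Qd.aux_antitone h1)
  have heCA : e ∈ Qd.commutant (Qd.commutant {e}) := Qd.aux_sub_bicomm {e} rfl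
  have hdCB : d ∈ Qd.commutant (Qd.commutant {d}) := Qd.aux_sub_bicomm {d} rfl
  have heC : e ∈ Qd.commutant (Qd.commutant G) := hCAsubC heCA
  have hdC : d ∈ Qd.commutant (Qd.commutant G) := hCBsubC hdCB
  have hχCA_A := hχ.2 _ A hvnCA hA hCAsubA
  have hχCA_C := hχ.2 _ _ hvnCA hvnC hCAsubC
  have hχCB_B := hχ.2 _ B hvnCB hB hCBsubB
  have hχCB_C := hχ.2 _ _ hvnCB hvnC hCBsubC
  have heNotχC : e ∉ χ (Qd.commutant (Qd.commutant G)) := by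
    intro hmem
    have h : e ∈ χ (Qd.commutant (Qd.commutant {e})) := by
      rw [hχCA_C]; exact ⟨heCA, hmem⟩
    rw [hχCA_A] at h
    exact heχ h.2
  have hdNotχC : d ∉ χ (Qd.commutant (Qd.commutant G)) := by
    intro hmem
    have h : d ∈ χ (Qd.commutant (Qd.commutant {d})) := by
      rw [hχCB_C]; exact ⟨hdCB, hmem⟩
    rw [hχCB_B] at h
    exact hdχ h.2
  have hPK := hχ.1 _ hvnC
  have h0 : qzero ∈ χ (Qd.commutant (Qd.commutant G)) := hPK.ideal.zero_mem
  rcases hPK.prime e heC d hdC (by rw [hcontra]; exact h0) with h | h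
  · exact heNotχC h
  · exact hdNotχC h

end CommInvQuantale
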